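/- arXiv:1707.00143 — 3 statements merged into one kernel-verified Lean document; each statement's English description precedes it below -/
import Mathlib

section
/- Let S be a finite point set in E^d with all pairwise distances distinct, and let G be the MRNG on S: for each p and each q ∈ S\{p}, the edge p→q is in G if and only if for every r ∈ lune(p,q) ∩ S, the edge p→r is NOT in G. Then G is a monotonic search network: for any two distinct nodes p, q there exists an edge p→r of G with δ(r, q) < δ(p, q). -/
/-- The lune of `p` and `q`: intersection of the two open balls of radius `δ(p,q)`. -/
def lune {d : ℕ} (p q : EuclideanSpace ℝ (Fin d)) : Set (EuclideanSpace ℝ (Fin d)) :=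
  Metric.ball p (dist p q) ∩ Metric.ball q (dist p q)

/-- The MRNG on a finite point set with distinct pairwise distances is a
monotonic search network: for any distinct `p q ∈ S` there is an edge `p → r` with
`dist r q < dist p q`. -/
theorem mrng_is_msnet {d : ℕ}
    (S : Finset (EuclideanSpace ℝ (Fin d)))
    (hdistinct : ∀ p ∈ S, ∀ q ∈ S, ∀ r ∈ S, ∀ s ∈ S,
      p ≠ q → r ≠ s → (p ≠ r ∨ q ≠ s) → (p ≠ s ∨ q ≠ r) → dist p q ≠ dist r s)
    (Ed : EuclideanSpace ℝ (Fin d) → EuclideanSpace ℝ (Fin d) → Prop)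
    (hMRNG : ∀ p ∈ S, ∀ q ∈ S, q ≠ p →
      (Ed p q ↔ ∀ r ∈ S, r ∈ lune p q → ¬ Ed p r)) :
    ∀ p ∈ S, ∀ q ∈ S, p ≠ q →
      ∃ r ∈ S, Ed p r ∧ dist r q < dist p q := by
  intro p hp q hq hpq
  by_cases hEd : Ed p q
  · exact ⟨q, hq, hEd, by simpa [dist_self] using dist_pos.mpr hpq⟩
  · have h := (hMRNG p hp q hq hpq.symm).not.mp hEd
    push_neg at h
    obtain ⟨r, hrS, hrl, hEdr⟩ := h
    exact ⟨r, hrS, hEdr, Metric.mem_ball.mp hrl.2⟩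
end

section
/- In the relative neighborhood graph (RNG) on a finite set S with distinct pairwise distances, any two distinct neighbors q, r of a common node p satisfy: qr is strictly the longest side of triangle pqr, and hence the angle at p between edges pq and pr exceeds π/3. Consequently the degree of every node in the RNG is at most a constant depending only on the dimension d. -/
open EuclideanGeometry

/-- An RNG neighbor relation on `S`: `x` and `y` are joined iff they are distinct and
`lune(x,y)` contains no point of `S`. -/
def rngAdj {d : ℕ} (S : Finset (EuclideanSpace ℝ (Fin d)))
    (x y : EuclideanSpace ℝ (Fin d)) : Prop :=
  x ≠ y ∧ ∀ r ∈ S, r ∉ lune x y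

/-! If `q` and `r` are RNG neighbours of `p`, then `r ∉ lune(p,q)` gives
`δ(p,q) ≤ max(δ(p,r), δ(q,r))` and symmetrically; with distinct distances this makes `qr` the
strict longest side of `pqr`, and the law of cosines turns that into `∠qpr > π/3`.
Projecting the neighbours of `p` radially onto the unit sphere around `p` then yields points at
mutual distance `> 1`, and a compact sphere has finite packing number. -/

theorem Metric.packingNumber_ne_top_of_totallyBounded {X : Type*} [PseudoEMetricSpace X]
    {A : Set X} {ε : NNReal} (hA : TotallyBounded A) (hε : ε ≠ 0) : packingNumber ε A ≠ ⊤ := by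
  obtain ⟨C, -, hC, hcover⟩ := exists_finite_isCover_of_totallyBounded (ε := ε / 2) (by simpa) hA
  refine ne_top_of_le_ne_top hC.encard_lt_top.ne ?_
  calc packingNumber ε A = packingNumber (2 * (ε / 2)) A := by rw [mul_div_cancel₀ _ two_ne_zero]
    _ ≤ externalCoveringNumber (ε / 2) A := packingNumber_two_mul_le_externalCoveringNumber _ _
    _ ≤ C.encard := hcover.externalCoveringNumber_le_encard

open Metric in
theorem TotallyBounded.exists_ncard_le_of_isSeparated {X : Type*} [PseudoEMetricSpace X]
    {A : Set X} {ε : NNReal} (hA : TotallyBounded A) (hε : ε ≠ 0) :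
    ∃ K : ℕ, ∀ C ⊆ A, IsSeparated ε C → C.ncard ≤ K := by
  have htop := packingNumber_ne_top_of_totallyBounded hA hε
  refine ⟨(packingNumber ε A).toNat, fun C hCA hC => ?_⟩
  exact ENat.toNat_le_toNat (hC.encard_le_packingNumber hCA) htop

theorem Real.pi_div_three_lt_iff_cos_lt_one_half {θ : ℝ} (h0 : 0 ≤ θ) (hπ : θ ≤ Real.pi) :
    Real.pi / 3 < θ ↔ Real.cos θ < 1 / 2 := by
  rw [← Real.cos_pi_div_three]
  have hπ3 : Real.pi / 3 ∈ Set.Icc 0 Real.pi := ⟨by positivity, by linarith [Real.pi_pos]⟩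
  exact (Real.strictAntiOn_cos.lt_iff_gt ⟨h0, hπ⟩ hπ3).symm

section Angle

variable {V P : Type*} [NormedAddCommGroup V] [InnerProductSpace ℝ V] [MetricSpace P]
  [NormedAddTorsor V P]

theorem EuclideanGeometry.pi_div_three_lt_angle_of_dist_lt {p q r : P}
    (hq : dist p q < dist q r) (hr : dist p r < dist q r) : Real.pi / 3 < ∠ q p r := by
  rw [Real.pi_div_three_lt_iff_cos_lt_one_half (angle_nonneg q p r) (angle_le_pi q p r)]
  by_contra! hcos
  have ha := dist_nonneg (x := p) (y := q)
  have hb := dist_nonneg (x := p) (y := r)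
  have hlaw : dist q r ^ 2 ≤ dist p q ^ 2 + dist p r ^ 2 - dist p q * dist p r := by
    rw [sq, sq, sq, law_cos q p r, dist_comm q p, dist_comm r p]
    nlinarith [mul_nonneg ha hb]
  -- the right-hand side of `hlaw` is at most `max (dist p q) (dist p r) ^ 2`
  rcases le_total (dist p q) (dist p r) with h | h <;> nlinarith

theorem InnerProductGeometry.one_lt_dist_of_pi_div_three_lt_angle {u v : V} (hu : ‖u‖ = 1)
    (hv : ‖v‖ = 1) (h : Real.pi / 3 < angle u v) : 1 < dist u v := by
  rw [Real.pi_div_three_lt_iff_cos_lt_one_half (angle_nonneg u v) (angle_le_pi u v)] at h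
  have hlaw := norm_sub_sq_eq_norm_sq_add_norm_sq_sub_two_mul_norm_mul_norm_mul_cos_angle u v
  rw [hu, hv] at hlaw
  rw [dist_eq_norm]
  nlinarith [norm_nonneg (u - v)]

theorem EuclideanGeometry.exists_ncard_le_of_pairwise_pi_div_three_lt_angle
    [FiniteDimensional ℝ V] :
    ∃ K : ℕ, ∀ (p : P) (N : Set P), p ∉ N → N.Pairwise (fun x y => Real.pi / 3 < ∠ x p y) →
      N.ncard ≤ K := by
  obtain ⟨K, hK⟩ := (isCompact_sphere (0 : V) 1).totallyBounded.exists_ncard_le_of_isSeparated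
    one_ne_zero
  refine ⟨K, fun p N hpN hN => ?_⟩
  set f : P → V := fun x => ‖x -ᵥ p‖⁻¹ • (x -ᵥ p)
  have hne : ∀ x ∈ N, x -ᵥ p ≠ 0 := fun x hx => vsub_ne_zero.2 (ne_of_mem_of_not_mem hx hpN)
  have hsphere : ∀ x ∈ N, ‖f x‖ = 1 := fun x hx => norm_smul_inv_norm (hne x hx)
  have hsep : ∀ x ∈ N, ∀ y ∈ N, x ≠ y → 1 < dist (f x) (f y) := by
    intro x hx y hy hxy
    refine InnerProductGeometry.one_lt_dist_of_pi_div_three_lt_angle (hsphere x hx)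
      (hsphere y hy) ?_
    rw [InnerProductGeometry.angle_smul_left_of_pos _ _ (inv_pos.2 (norm_pos_iff.2 (hne x hx))),
      InnerProductGeometry.angle_smul_right_of_pos _ _ (inv_pos.2 (norm_pos_iff.2 (hne y hy)))]
    exact hN hx hy hxy
  have hinj : Set.InjOn f N := fun x hx y hy hfxy =>
    by_contra fun hxy => absurd (hsep x hx y hy hxy) (by simp [hfxy])
  rw [← hinj.ncard_image]
  refine hK _ ?_ ?_
  · rintro _ ⟨x, hx, rfl⟩
    simpa using hsphere x hx
  · rintro _ ⟨x, hx, rfl⟩ _ ⟨y, hy, rfl⟩ hfxy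
    simpa [edist_dist, ENNReal.one_lt_ofReal] using hsep x hx y hy (fun h => hfxy (h ▸ rfl))

end Angle

def HasDistinctDistances {α : Type*} [PseudoMetricSpace α] (S : Finset α) : Prop :=
  ∀ p ∈ S, ∀ q ∈ S, ∀ r ∈ S, ∀ s ∈ S,
    p ≠ q → r ≠ s → (p ≠ r ∨ q ≠ s) → (p ≠ s ∨ q ≠ r) → dist p q ≠ dist r s

section RNG

variable {d : ℕ} {S : Finset (EuclideanSpace ℝ (Fin d))} {p q r : EuclideanSpace ℝ (Fin d)}

theorem dist_le_max_of_rngAdj (hpq : rngAdj S p q) (hr : r ∈ S) :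
    dist p q ≤ max (dist p r) (dist q r) := by
  have := hpq.2 r hr
  simp only [lune, Set.mem_inter_iff, Metric.mem_ball, not_and_or, not_lt] at this
  rw [dist_comm r p, dist_comm r q] at this
  exact le_max_iff.2 this

theorem HasDistinctDistances.dist_lt_of_rngAdj (hS : HasDistinctDistances S) (hp : p ∈ S)
    (hq : q ∈ S) (hr : r ∈ S) (hpq : rngAdj S p q) (hpr : rngAdj S p r) (hqr : q ≠ r) :
    dist p q < dist q r ∧ dist p r < dist q r := by
  have h₁ : dist p q ≠ dist p r := hS p hp q hq p hp r hr hpq.1 hpr.1 (.inr hqr) (.inl hpr.1)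
  have h₂ : dist p q ≠ dist q r := hS p hp q hq q hq r hr hpq.1 hqr (.inl hpq.1) (.inl hpr.1)
  have h₃ : dist p r ≠ dist q r := hS p hp r hr q hq r hr hpr.1 hqr (.inl hpq.1) (.inl hpr.1)
  have hpq_le := dist_le_max_of_rngAdj hpq hr
  have hpr_le := dist_le_max_of_rngAdj hpr hq
  rw [dist_comm r q] at hpr_le
  rcases le_max_iff.1 hpq_le with hpq_le | hpq_le <;>
    rcases le_max_iff.1 hpr_le with hpr_le | hpr_le
  · exact absurd (le_antisymm hpq_le hpr_le) h₁
  · have hpr_lt := lt_of_le_of_ne hpr_le h₃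
    exact ⟨hpq_le.trans_lt hpr_lt, hpr_lt⟩
  · have hpq_lt := lt_of_le_of_ne hpq_le h₂
    exact ⟨hpq_lt, hpr_le.trans_lt hpq_lt⟩
  · exact ⟨lt_of_le_of_ne hpq_le h₂, lt_of_le_of_ne hpr_le h₃⟩

end RNG

/-- In the RNG on a finite set with distinct pairwise distances, any two
distinct neighbors `q, r` of a node `p` satisfy that `qr` is strictly the longest side
of triangle `pqr`, hence the angle at `p` exceeds `π/3`; consequently there is a
constant `K` depending only on `d` bounding the degree of every node of every RNG. -/
theorem rng_angle_and_degree_bound (d : ℕ) :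
    (∀ (S : Finset (EuclideanSpace ℝ (Fin d))),
      (∀ p ∈ S, ∀ q ∈ S, ∀ r ∈ S, ∀ s ∈ S,
        p ≠ q → r ≠ s → (p ≠ r ∨ q ≠ s) → (p ≠ s ∨ q ≠ r) → dist p q ≠ dist r s) →
      ∀ p ∈ S, ∀ q ∈ S, ∀ r ∈ S, rngAdj S p q → rngAdj S p r → q ≠ r →
        (dist q r > dist p q ∧ dist q r > dist p r ∧ ∠ q p r > Real.pi / 3)) ∧
    (∃ K : ℕ, ∀ (S : Finset (EuclideanSpace ℝ (Fin d))),
      (∀ p ∈ S, ∀ q ∈ S, ∀ r ∈ S, ∀ s ∈ S,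
        p ≠ q → r ≠ s → (p ≠ r ∨ q ≠ s) → (p ≠ s ∨ q ≠ r) → dist p q ≠ dist r s) →
      ∀ p ∈ S, {x | x ∈ S ∧ rngAdj S p x}.ncard ≤ K) := by
  refine ⟨fun S hS p hp q hq r hr hpq hpr hqr => ?_, ?_⟩
  · obtain ⟨hpq_lt, hpr_lt⟩ := HasDistinctDistances.dist_lt_of_rngAdj hS hp hq hr hpq hpr hqr
    exact ⟨hpq_lt, hpr_lt, pi_div_three_lt_angle_of_dist_lt hpq_lt hpr_lt⟩
  · obtain ⟨K, hK⟩ := exists_ncard_le_of_pairwise_pi_div_three_lt_angle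
      (P := EuclideanSpace ℝ (Fin d))
    refine ⟨K, fun S hS p hp => hK p _ (fun hp' => hp'.2.1 rfl) fun q hq r hr hqr => ?_⟩
    obtain ⟨hpq_lt, hpr_lt⟩ := HasDistinctDistances.dist_lt_of_rngAdj hS hp hq.1 hr.1 hq.2 hr.2 hqr
    exact pi_div_three_lt_angle_of_dist_lt hpq_lt hpr_lt
end

section
/- Let q be a point and v₁, ..., v_k a sequence of points in ℝ^d with δ(v_i, q) strictly decreasing, and let R = δ(v₁, q). Suppose that for all i ≤ k−2 we have δ(v_i, q) − δ(v_{i+1}, q) ≥ Δr for a fixed Δr with 0 < Δr < R. Then, setting η̂ = ((R − Δr)/R)^d, the ratio of ball volumes satisfies Vol(B(q, δ(v_k, q))) / Vol(B(q, R)) ≤ η̂^{k−2}, and hence k − 2 ≤ d·(log δ(v_k,q) − log R) / (log(R − Δr) − log R). -/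
open MeasureTheory

/-- Volume-shrinking bound along a monotonic path. If the distances
`δ(vᵢ, q)` strictly decrease, start at `R = δ(v₁,q)`, and each of the first `k - 2`
steps decreases the distance by at least `Δr`, then with `η̂ = ((R-Δr)/R)^d` we get
`Vol(B(q, δ(v_k,q))) ≤ η̂^(k-2) · Vol(B(q, R))` and
`k - 2 ≤ d (log δ(v_k,q) - log R) / (log(R-Δr) - log R)`. -/
theorem msnet_path_length_core {d : ℕ} (hd : 0 < d)
    (q : EuclideanSpace ℝ (Fin d)) (v : ℕ → EuclideanSpace ℝ (Fin d))
    (k : ℕ) (hk : 2 ≤ k) (R Δr : ℝ)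
    (hR : R = dist (v 1) q)
    (hΔpos : 0 < Δr) (hΔR : Δr < R)
    (hdec : ∀ i, 1 ≤ i → i < k → dist (v (i + 1)) q < dist (v i) q)
    (hgap : ∀ i, 1 ≤ i → i ≤ k - 2 → Δr ≤ dist (v i) q - dist (v (i + 1)) q)
    (hpos : 0 < dist (v k) q) :
    volume (Metric.ball q (dist (v k) q)) ≤
      ENNReal.ofReal ((((R - Δr) / R) ^ d) ^ (k - 2)) * volume (Metric.ball q R) ∧
    (k : ℝ) - 2 ≤
      d * (Real.log (dist (v k) q) - Real.log R) /
        (Real.log (R - Δr) - Real.log R) := by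
  have hRpos : (0:ℝ) < R := hΔpos.trans hΔR
  set η : ℝ := (R - Δr) / R with hηdef
  have hη0 : 0 < η := div_pos (by linarith) hRpos
  have hη1 : η < 1 := by rw [div_lt_one hRpos]; linarith
  have key : ∀ n, 1 ≤ n → n ≤ k - 1 → dist (v n) q ≤ η ^ (n - 1) * R := by
    intro n
    induction n with
    | zero => omega
    | succ m ih =>
      intro _ hnk
      rcases Nat.eq_zero_or_pos m with hm0 | hm1
      · subst hm0; simp [← hR]
      · have hmk : m ≤ k - 1 := by omega
        have hdm := ih hm1 hmk
        have hdmR : dist (v m) q ≤ R := by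
          have : η ^ (m - 1) ≤ 1 := pow_le_one₀ hη0.le hη1.le
          nlinarith
        have hgapm := hgap m hm1 (by omega)
        have hstep : dist (v (m + 1)) q ≤ η * dist (v m) q := by
          rw [hηdef, div_mul_eq_mul_div, le_div_iff₀ hRpos]
          nlinarith
        have : η * dist (v m) q ≤ η ^ m * R := by
          have : η * dist (v m) q ≤ η * (η ^ (m - 1) * R) :=
            mul_le_mul_of_nonneg_left hdm hη0.le
          calc η * dist (v m) q ≤ η * (η ^ (m - 1) * R) := this
            _ = η ^ m * R := by
              rw [← mul_assoc, ← pow_succ']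
              congr 2
              omega
        simpa using hstep.trans this
  have hmain : dist (v k) q ≤ η ^ (k - 2) * R := by
    have h1 := key (k - 1) (by omega) le_rfl
    have h2 := hdec (k - 1) (by omega) (by omega)
    have hk1 : k - 1 + 1 = k := by omega
    rw [hk1] at h2
    have hk2 : k - 1 - 1 = k - 2 := by omega
    rw [hk2] at h1
    exact h2.le.trans h1
  constructor
  · haveI : Nontrivial (EuclideanSpace ℝ (Fin d)) :=
      Module.nontrivial_of_finrank_pos (by rw [finrank_euclideanSpace_fin]; exact hd)
    rw [Measure.addHaar_ball volume q hpos.le, Measure.addHaar_ball volume q hRpos.le,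
      finrank_euclideanSpace_fin, ← mul_assoc, ← ENNReal.ofReal_mul (by positivity)]
    refine mul_le_mul_left (ENNReal.ofReal_le_ofReal ?_) _
    calc dist (v k) q ^ d ≤ (η ^ (k - 2) * R) ^ d :=
          pow_le_pow_left₀ dist_nonneg hmain d
      _ = (η ^ d) ^ (k - 2) * R ^ d := by
          rw [mul_pow, ← pow_mul, ← pow_mul, Nat.mul_comm]
  · have hlogη : Real.log η < 0 := Real.log_neg hη0 hη1
    have hLeq : Real.log (R - Δr) - Real.log R = Real.log η := by
      rw [hηdef, Real.log_div (by linarith) (by linarith)]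
    have hX : Real.log (dist (v k) q) - Real.log R ≤ ((k:ℝ) - 2) * Real.log η := by
      have h1 : Real.log (dist (v k) q) ≤ Real.log (η ^ (k - 2) * R) :=
        Real.log_le_log hpos hmain
      rw [Real.log_mul (by positivity) (by linarith), Real.log_pow] at h1
      have : ((k - 2 : ℕ) : ℝ) = (k:ℝ) - 2 := by
        rw [Nat.cast_sub hk]; norm_num
      rw [this] at h1
      linarith
    rw [hLeq, le_div_iff_of_neg hlogη]
    have hd1 : (1:ℝ) ≤ d := by exact_mod_cast hd
    have hk2 : (0:ℝ) ≤ (k:ℝ) - 2 := by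
      have : (2:ℝ) ≤ k := by exact_mod_cast hk
      linarith
    nlinarith [mul_le_mul_of_nonneg_left hX (by linarith : (0:ℝ) ≤ (d:ℝ)),
      mul_nonneg hk2 (neg_nonneg.mpr hlogη.le)]
end
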